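/- The rotation group SO(3) contains a subgroup that is free of rank 2. -/

import Mathlib

/-!
Let `a`, `b` be the rotations with cosine `3/5` about the `z`- and `x`-axes. Each of the four
letters `a^{±1}`, `b^{±1}`, scaled by 5, is an integer matrix whose reduction mod 5 has rank one,
`5x ≡ u_x u_{x⁻¹}ᵀ`, and `u_{x⁻¹} ⬝ᵥ u_y ≢ 0` unless `y = x⁻¹`. So for a nonempty reduced word `w`
of length `n` the integer matrix `5ⁿ w` is a product of rank-one matrices that does not vanish
mod 5, while `w = 1` would force `5ⁿ w = 5ⁿ • 1 ≡ 0`.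
-/

open scoped Pointwise

/-- `A` and `B` are `G`-equidecomposable: there are finite partitions
`A = A₁ ∪ … ∪ Aₙ` and `B = B₁ ∪ … ∪ Bₙ` into pairwise disjoint pieces and
`g₁, …, gₙ ∈ G` with `Bᵢ = gᵢ • Aᵢ`. -/
def EquidecompSets (G : Type*) {X : Type*} [Group G] [MulAction G X] (A B : Set X) : Prop :=
  ∃ (n : ℕ) (P : Fin n → Set X) (g : Fin n → G),
    Pairwise (Function.onFun Disjoint P) ∧ (⋃ i, P i) = A ∧
    Pairwise (Function.onFun Disjoint fun i => g i • P i) ∧ (⋃ i, g i • P i) = B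

/-- `E` is `G`-paradoxical: `E` is nonempty and splits into two disjoint pieces,
each `G`-equidecomposable with `E`. -/
def Paradoxical (G : Type*) {X : Type*} [Group G] [MulAction G X] (E : Set X) : Prop :=
  E.Nonempty ∧ ∃ A B : Set X, A ∪ B = E ∧ Disjoint A B ∧
    EquidecompSets G A E ∧ EquidecompSets G B E

abbrev E3 : Type := EuclideanSpace ℝ (Fin 3)
abbrev SO3 : Type := Matrix.specialOrthogonalGroup (Fin 3) ℝ

noncomputable instance : Group SO3 :=
  { (inferInstance : Monoid SO3) with
    inv := fun A => ⟨star A.1, by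
      refine ⟨Unitary.star_mem A.2.1, ?_⟩
      show (star A.1).det = 1
      have h : A.1.det = 1 := A.2.2
      rw [Matrix.star_eq_conjTranspose, Matrix.det_conjTranspose, h]
      simp⟩
    inv_mul_cancel := fun A => Subtype.ext (Matrix.mem_unitaryGroup_iff'.mp A.2.1) }

noncomputable instance : SMul SO3 E3 := ⟨fun g x => WithLp.toLp 2 (g.1.mulVec x)⟩

/-- `SO3` acts on `ℝ³` by rotation (matrix-vector multiplication). -/
noncomputable instance : MulAction SO3 E3 where
  one_smul x := congrArg (WithLp.toLp 2) (Matrix.one_mulVec x.ofLp)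
  mul_smul g h x := congrArg (WithLp.toLp 2) (Matrix.mulVec_mulVec x.ofLp g.1 h.1).symm

lemma SO3.smul_add (g : SO3) (x y : E3) : g • (x + y) = g • x + g • y :=
  congrArg (WithLp.toLp 2) (Matrix.mulVec_add g.1 x.ofLp y.ofLp)

lemma SO3.smul_neg (g : SO3) (x : E3) : g • (-x) = -(g • x) :=
  congrArg (WithLp.toLp 2) (Matrix.mulVec_neg x.ofLp g.1)

namespace Matrix

variable {n : Type*} [Fintype n] [DecidableEq n]

section RankOne

variable {α R : Type*} [CommRing R] [NoZeroDivisors R]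

theorem exists_prod_map_vecMulVec_eq_vecMulVec {u k : α → n → R} (hk : ∀ a, k a ≠ 0) :
    ∀ (a : α) (L : List α), (a :: L).IsChain (fun a b => k a ⬝ᵥ u b ≠ 0) →
      ∃ w ≠ 0, ((a :: L).map fun b => vecMulVec (u b) (k b)).prod = vecMulVec (u a) w
  | a, [], _ => ⟨k a, hk a, by simp⟩
  | a, b :: L, h => by
    rw [List.isChain_cons_cons] at h
    obtain ⟨w, hw, hprod⟩ := exists_prod_map_vecMulVec_eq_vecMulVec hk b L h.2
    refine ⟨(k a ⬝ᵥ u b) • w, smul_ne_zero h.1 hw, ?_⟩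
    rw [List.map_cons, List.prod_cons, hprod, vecMulVec_mul_vecMulVec]

theorem prod_map_vecMulVec_ne_zero {u k : α → n → R} (hu : ∀ a, u a ≠ 0) (hk : ∀ a, k a ≠ 0)
    {L : List α} (hL : L ≠ []) (hchain : L.IsChain (fun a b => k a ⬝ᵥ u b ≠ 0)) :
    (L.map fun b => vecMulVec (u b) (k b)).prod ≠ 0 := by
  obtain ⟨a, L, rfl⟩ := List.exists_cons_of_ne_nil hL
  obtain ⟨w, hw, hprod⟩ := exists_prod_map_vecMulVec_eq_vecMulVec hk a L hchain
  rw [hprod]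
  exact vecMulVec_ne_zero (hu a) hw

end RankOne

theorem inv_smul_mem_specialOrthogonalGroup {A : Matrix n n ℝ} {c : ℝ} (hc : c ≠ 0)
    (hA : A * Aᵀ = c ^ 2 • 1) (hdet : A.det = c ^ Fintype.card n) :
    c⁻¹ • A ∈ specialOrthogonalGroup n ℝ := by
  rw [mem_specialOrthogonalGroup_iff, mem_orthogonalGroup_iff, transpose_smul,
    smul_mul_smul_comm, hA, det_smul, hdet, smul_smul, ← mul_pow, inv_mul_cancel₀ hc, one_pow]
  exact ⟨by rw [← sq, ← mul_pow, inv_mul_cancel₀ hc, one_pow, one_smul], rfl⟩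

theorem inv_smul_map_intCast_mem_specialOrthogonalGroup {A : Matrix n n ℤ} {c : ℤ} (hc : c ≠ 0)
    (hA : A * Aᵀ = c ^ 2 • 1) (hdet : A.det = c ^ Fintype.card n) :
    (c : ℝ)⁻¹ • A.map (Int.cast : ℤ → ℝ) ∈ specialOrthogonalGroup n ℝ := by
  refine inv_smul_mem_specialOrthogonalGroup (by exact_mod_cast hc) ?_ ?_
  · ext i j
    have hij := congr_fun₂ hA i j
    by_cases h : i = j <;> simp [mul_apply, h] at hij ⊢ <;> exact_mod_cast hij
  · rw [← Int.cast_det, hdet, Int.cast_pow]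

end Matrix

namespace SO3

open Matrix

def scaledRot : Fin 2 → Matrix (Fin 3) (Fin 3) ℤ :=
  ![!![3, -4, 0; 4, 3, 0; 0, 0, 5], !![5, 0, 0; 0, 3, -4; 0, 4, 3]]

theorem scaledRot_mul_transpose (i : Fin 2) : scaledRot i * (scaledRot i)ᵀ = 5 ^ 2 • 1 := by
  fin_cases i <;> decide

theorem det_scaledRot (i : Fin 2) : (scaledRot i).det = 5 ^ 3 := by
  fin_cases i <;> simp [scaledRot, det_fin_three]

noncomputable def rot (i : Fin 2) : SO3 :=
  ⟨(5 : ℝ)⁻¹ • (scaledRot i).map Int.cast, by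
    simpa using inv_smul_map_intCast_mem_specialOrthogonalGroup (c := 5) (by norm_num)
      (scaledRot_mul_transpose i) (det_scaledRot i)⟩

def scaledLetter (x : Fin 2 × Bool) : Matrix (Fin 3) (Fin 3) ℤ :=
  cond x.2 (scaledRot x.1) (scaledRot x.1)ᵀ

theorem coe_cond_rot (x : Fin 2 × Bool) :
    ((cond x.2 (rot x.1) (rot x.1)⁻¹ : SO3) : Matrix (Fin 3) (Fin 3) ℝ) =
      (5 : ℝ)⁻¹ • (scaledLetter x).map Int.cast := by
  obtain ⟨i, _ | _⟩ := x
  · show star ((5 : ℝ)⁻¹ • (scaledRot i).map Int.cast) = _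
    rw [star_eq_conjTranspose, conjTranspose_smul, conjTranspose_eq_transpose_of_trivial,
      star_trivial, ← transpose_map]
    rfl
  · rfl

theorem coe_lift_rot_mk (L : List (Fin 2 × Bool)) :
    ((FreeGroup.lift rot (FreeGroup.mk L) : SO3) : Matrix (Fin 3) (Fin 3) ℝ) =
      (5 : ℝ)⁻¹ ^ L.length • ((L.map scaledLetter).prod).map Int.cast := by
  rw [FreeGroup.lift_mk]
  induction L with
  | nil => simp
  | cons x L ih =>
    rw [List.map_cons, List.prod_cons, MulMemClass.coe_mul, ih, coe_cond_rot, List.map_cons,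
      List.prod_cons, smul_mul_smul_comm, List.length_cons, pow_succ']
    exact congrArg _ (Matrix.map_mul (f := Int.castRingHom ℝ)).symm

def axisMod5 (x : Fin 2 × Bool) : Fin 3 → ZMod 5 :=
  cond x.2 (![![1, 3, 0], ![0, 1, 3]] x.1) (![![3, 1, 0], ![0, 3, 1]] x.1)

theorem map_scaledLetter_zmod5 (x : Fin 2 × Bool) :
    (scaledLetter x).map (Int.cast : ℤ → ZMod 5) =
      vecMulVec (axisMod5 x) (axisMod5 (x.1, !x.2)) := by
  revert x; decide

theorem dotProduct_axisMod5_ne_zero :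
    ∀ x y : Fin 2 × Bool, (x.1 = y.1 → x.2 = y.2) → axisMod5 (x.1, !x.2) ⬝ᵥ axisMod5 y ≠ 0 := by
  decide

theorem map_prod_scaledLetter_zmod5_ne_zero {L : List (Fin 2 × Bool)}
    (hL : FreeGroup.IsReduced L) (hne : L ≠ []) : ((L.map scaledLetter).prod).map (Int.cast : ℤ → ZMod 5) ≠ 0 := by
  have hmap : ((L.map scaledLetter).prod).map (Int.cast : ℤ → ZMod 5) =
      (L.map fun x => vecMulVec (axisMod5 x) (axisMod5 (x.1, !x.2))).prod := by
    change (Int.castRingHom (ZMod 5)).mapMatrix _ = _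
    rw [map_list_prod, List.map_map]
    exact congrArg _ (List.map_congr_left fun x _ => map_scaledLetter_zmod5 x)
  have : Fact (Nat.Prime 5) := ⟨Nat.prime_five⟩
  rw [hmap]
  exact prod_map_vecMulVec_ne_zero (by decide) (by decide) hne
    (hL.imp fun x y => dotProduct_axisMod5_ne_zero x y)

theorem prod_scaledLetter_eq_of_lift_rot_eq_one {L : List (Fin 2 × Bool)}
    (h : FreeGroup.lift rot (FreeGroup.mk L) = 1) :
    (L.map scaledLetter).prod = (5 : ℤ) ^ L.length • (1 : Matrix (Fin 3) (Fin 3) ℤ) := by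
  have hcoe := coe_lift_rot_mk L
  rw [h, OneMemClass.coe_one] at hcoe
  have hreal : (L.map scaledLetter).prod.map (Int.cast : ℤ → ℝ) =
      (5 : ℝ) ^ L.length • (1 : Matrix (Fin 3) (Fin 3) ℝ) := by
    rw [hcoe, smul_smul, ← mul_pow, mul_inv_cancel₀ (by norm_num), one_pow, one_smul]
  apply Matrix.map_injective (f := (Int.cast : ℤ → ℝ)) Int.cast_injective
  beta_reduce
  rw [hreal]
  ext i j
  simp only [map_apply, Matrix.smul_apply, smul_eq_mul, one_apply]
  push_cast
  rfl

theorem lift_rot_injective : Function.Injective (FreeGroup.lift rot) := by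
  rw [injective_iff_map_eq_one]
  intro w hw
  rw [← FreeGroup.toWord_eq_nil_iff]
  by_contra hL
  apply map_prod_scaledLetter_zmod5_ne_zero FreeGroup.isReduced_toWord hL
  rw [prod_scaledLetter_eq_of_lift_rot_eq_one (by rwa [FreeGroup.mk_toWord])]
  ext i j
  rw [map_apply, Matrix.smul_apply, smul_eq_mul, Int.cast_mul, Int.cast_pow,
    show ((5 : ℤ) : ZMod 5) = 0 from rfl, zero_pow (List.length_pos_of_ne_nil hL).ne', zero_mul,
    Matrix.zero_apply]

end SO3

/-- `SO(3)` contains a subgroup that is free of rank 2. -/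
theorem so3_has_free_subgroup_rank_two :
    ∃ H : Subgroup SO3, Nonempty (H ≃* FreeGroup (Fin 2)) :=
  ⟨(FreeGroup.lift SO3.rot).range, ⟨(MonoidHom.ofInjective SO3.lift_rot_injective).symm⟩⟩
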